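/- Let f be homogeneous of degree ν > 0 with respect to (λ^r, λ^q), and ℓ, ȷ be homogeneous of degree μ (ℓ(λ^r(ε)x, λ^q(ε)u) = ε^μ ℓ(x,u) and ȷ(λ^r(ε)x) = ε^μ ȷ(x)). Define the finite-horizon cost J_{d,γ1,γ2}(x,u) = Σ_{k=0}^{d-1} γ1^{γ2^k} ℓ(φ(k,x,u), u_k) + γ1^{γ2^d} ȷ(φ(d,x,u)) and the value function V_{d,γ1,γ2}(x) = inf over input sequences of J_{d,γ1,γ2}(x,·). Assume minimizers exist for all these problems with finite value. Then for every x and ε > 0: V_{d,ε^{-μ},ν}(λ^r(ε)x) = V_{d,1,1}(x), and if u* is optimal for J_{d,1,1} at x, then the scaled sequence Λ(ε)u* (k-th element λ^q(ε)^{ν^k} u*_k) is optimal for J_{d,ε^{-μ},ν} at λ^r(ε)x. -/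

import Mathlib

open scoped ENNReal

noncomputable section

def dil {n : ℕ} (r : Fin n → ℝ) (ε : ℝ) (x : Fin n → ℝ) : Fin n → ℝ :=
  fun i => ε ^ (r i) * x i

def dilPow {n : ℕ} (r : Fin n → ℝ) (ε c : ℝ) (x : Fin n → ℝ) : Fin n → ℝ :=
  fun i => ε ^ (c * r i) * x i

def sol {n m : ℕ} (f : (Fin n → ℝ) → (Fin m → ℝ) → Fin n → ℝ)
    (u : ℕ → Fin m → ℝ) (x : Fin n → ℝ) : ℕ → Fin n → ℝ
  | 0 => x
  | k + 1 => f (sol f u x k) (u k)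

/-- Cost `J_{d,γ1,γ2}(x,u) = Σ_{k<d} γ1^{γ2^k} ℓ(φ(k,x,u),u_k) + γ1^{γ2^d} ȷ(φ(d,x,u))`. -/
def cost {n m : ℕ} (f : (Fin n → ℝ) → (Fin m → ℝ) → Fin n → ℝ)
    (ℓ : (Fin n → ℝ) → (Fin m → ℝ) → ℝ≥0∞) (J : (Fin n → ℝ) → ℝ≥0∞)
    (d : ℕ) (γ1 γ2 : ℝ) (x : Fin n → ℝ) (u : ℕ → Fin m → ℝ) : ℝ≥0∞ :=
  (∑ k ∈ Finset.range d, ENNReal.ofReal (γ1 ^ (γ2 ^ k)) * ℓ (sol f u x k) (u k))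
    + ENNReal.ofReal (γ1 ^ (γ2 ^ d)) * J (sol f u x d)

/-- Optimal value function `V_{d,γ1,γ2}(x)`. -/
def val {n m : ℕ} (f : (Fin n → ℝ) → (Fin m → ℝ) → Fin n → ℝ)
    (ℓ : (Fin n → ℝ) → (Fin m → ℝ) → ℝ≥0∞) (J : (Fin n → ℝ) → ℝ≥0∞)
    (d : ℕ) (γ1 γ2 : ℝ) (x : Fin n → ℝ) : ℝ≥0∞ :=
  ⨅ u : ℕ → Fin m → ℝ, cost f ℓ J d γ1 γ2 x u

/-!
The substitution `x ↦ λ^r(ε) x`, `u_k ↦ λ^q(ε)^{ν^k} u_k` maps trajectories to trajectories: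
by homogeneity of `f`, the `k`-th state is scaled by `λ^r(ε)^{ν^k}`. Hence the `k`-th stage
cost is multiplied by `ε^{μ ν^k}`, which the discount `(ε^{-μ})^{ν^k}` cancels exactly, so the
scaled input has the same cost for `J_{d,ε^{-μ},ν}` as the original one for `J_{d,1,1}`. Since the
scaling is a bijection of input sequences, the two infima agree and optimal inputs correspond.
-/

section Dilation

variable {n : ℕ} (r : Fin n → ℝ)

lemma dilPow_eq_dil {ε : ℝ} (hε : 0 ≤ ε) (c : ℝ) (x : Fin n → ℝ) :
    dilPow r ε c x = dil r (ε ^ c) x := by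
  funext i
  simp only [dilPow, dil, Real.rpow_mul hε]

lemma dilPow_rpow {ε : ℝ} (hε : 0 ≤ ε) (a c : ℝ) (x : Fin n → ℝ) :
    dilPow r (ε ^ a) c x = dilPow r ε (a * c) x := by
  funext i
  simp only [dilPow, ← Real.rpow_mul hε, mul_assoc]

lemma dilPow_zero (ε : ℝ) (x : Fin n → ℝ) : dilPow r ε 0 x = x := by
  funext i
  simp [dilPow]

lemma dilPow_dilPow {ε : ℝ} (hε : 0 < ε) (a b : ℝ) (x : Fin n → ℝ) :
    dilPow r ε a (dilPow r ε b x) = dilPow r ε (a + b) x := by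
  funext i
  simp only [dilPow, ← mul_assoc, ← Real.rpow_add hε, add_mul]

end Dilation

/-- The paper's `Λ(ε)`. -/
def inputDil {m : ℕ} (q : Fin m → ℝ) (ν ε : ℝ) (u : ℕ → Fin m → ℝ) : ℕ → Fin m → ℝ :=
  fun k => dilPow q ε (ν ^ k) (u k)

lemma inputDil_surjective {m : ℕ} (q : Fin m → ℝ) (ν : ℝ) {ε : ℝ} (hε : 0 < ε) :
    Function.Surjective (inputDil q ν ε) := fun v =>
  ⟨fun k => dilPow q ε (-(ν ^ k)) (v k), funext fun k => by
    simp only [inputDil, dilPow_dilPow q hε, add_neg_cancel, dilPow_zero]⟩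

section Homogeneous

variable {n m : ℕ} (f : (Fin n → ℝ) → (Fin m → ℝ) → Fin n → ℝ)
  (ℓ : (Fin n → ℝ) → (Fin m → ℝ) → ℝ≥0∞) (J : (Fin n → ℝ) → ℝ≥0∞)
  (r : Fin n → ℝ) (q : Fin m → ℝ) (ν μ : ℝ)

lemma sol_inputDil
    (hf : ∀ x u (ε : ℝ), 0 < ε → f (dil r ε x) (dil q ε u) = dilPow r ε ν (f x u))
    {ε : ℝ} (hε : 0 < ε) (x : Fin n → ℝ) (u : ℕ → Fin m → ℝ) (k : ℕ) :
    sol f (inputDil q ν ε u) (dil r ε x) k = dilPow r ε (ν ^ k) (sol f u x k) := by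
  induction k with
  | zero => simpa [sol] using (dilPow_eq_dil r hε.le 1 x).symm
  | succ k ih =>
    rw [sol, sol, ih, inputDil, dilPow_eq_dil r hε.le, dilPow_eq_dil q hε.le,
      hf _ _ _ (Real.rpow_pos_of_pos hε _), dilPow_rpow r hε.le, ← pow_succ]

lemma cost_inputDil
    (hf : ∀ x u (ε : ℝ), 0 < ε → f (dil r ε x) (dil q ε u) = dilPow r ε ν (f x u))
    (hℓ : ∀ x u (ε : ℝ), 0 < ε →
      ℓ (dil r ε x) (dil q ε u) = ENNReal.ofReal (ε ^ μ) * ℓ x u)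
    (hJ : ∀ x (ε : ℝ), 0 < ε → J (dil r ε x) = ENNReal.ofReal (ε ^ μ) * J x)
    (d : ℕ) {ε : ℝ} (hε : 0 < ε) (x : Fin n → ℝ) (u : ℕ → Fin m → ℝ) :
    cost f ℓ J d (ε ^ (-μ)) ν (dil r ε x) (inputDil q ν ε u) = cost f ℓ J d 1 1 x u := by
  have discount_cancels (k : ℕ) (a : ℝ≥0∞) :
      ENNReal.ofReal ((ε ^ (-μ)) ^ ν ^ k) * (ENNReal.ofReal ((ε ^ ν ^ k) ^ μ) * a)
        = a := by
    rw [← mul_assoc, ← ENNReal.ofReal_mul (by positivity), ← Real.rpow_mul hε.le,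
      ← Real.rpow_mul hε.le, ← Real.rpow_add hε, neg_mul, mul_comm (ν ^ k) μ, neg_add_cancel,
      Real.rpow_zero, ENNReal.ofReal_one, one_mul]
  have hεk (k : ℕ) : 0 < ε ^ ν ^ k := Real.rpow_pos_of_pos hε _
  simp only [cost, sol_inputDil f r q ν hf hε, inputDil, dilPow_eq_dil _ hε.le, hℓ _ _ _ (hεk _),
    hJ _ _ (hεk _), discount_cancels, one_pow, Real.one_rpow, ENNReal.ofReal_one, one_mul]

lemma val_dil
    (hf : ∀ x u (ε : ℝ), 0 < ε → f (dil r ε x) (dil q ε u) = dilPow r ε ν (f x u))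
    (hℓ : ∀ x u (ε : ℝ), 0 < ε →
      ℓ (dil r ε x) (dil q ε u) = ENNReal.ofReal (ε ^ μ) * ℓ x u)
    (hJ : ∀ x (ε : ℝ), 0 < ε → J (dil r ε x) = ENNReal.ofReal (ε ^ μ) * J x)
    (d : ℕ) {ε : ℝ} (hε : 0 < ε) (x : Fin n → ℝ) :
    val f ℓ J d (ε ^ (-μ)) ν (dil r ε x) = val f ℓ J d 1 1 x := by
  rw [val, ← (inputDil_surjective q ν hε).iInf_comp]
  exact iInf_congr (cost_inputDil f ℓ J r q ν μ hf hℓ hJ d hε x)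

end Homogeneous

theorem stmt2_general {n m : ℕ} (f : (Fin n → ℝ) → (Fin m → ℝ) → Fin n → ℝ)
    (ℓ : (Fin n → ℝ) → (Fin m → ℝ) → ℝ≥0∞) (J : (Fin n → ℝ) → ℝ≥0∞)
    (r : Fin n → ℝ) (q : Fin m → ℝ) (ν μ : ℝ)
    (hf : ∀ x u (ε : ℝ), 0 < ε → f (dil r ε x) (dil q ε u) = dilPow r ε ν (f x u))
    (hℓ : ∀ x u (ε : ℝ), 0 < ε →
      ℓ (dil r ε x) (dil q ε u) = ENNReal.ofReal (ε ^ μ) * ℓ x u)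
    (hJ : ∀ x (ε : ℝ), 0 < ε → J (dil r ε x) = ENNReal.ofReal (ε ^ μ) * J x)
    (d : ℕ) :
    ∀ (x : Fin n → ℝ) (ε : ℝ), 0 < ε →
      val f ℓ J d (ε ^ (-μ)) ν (dil r ε x) = val f ℓ J d 1 1 x ∧
      ∀ ustar : ℕ → Fin m → ℝ,
        cost f ℓ J d 1 1 x ustar = val f ℓ J d 1 1 x →
        cost f ℓ J d (ε ^ (-μ)) ν (dil r ε x) (fun k => dilPow q ε (ν ^ k) (ustar k))
          = val f ℓ J d (ε ^ (-μ)) ν (dil r ε x) := by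
  intro x ε hε
  have hval := val_dil f ℓ J r q ν μ hf hℓ hJ d hε x
  refine ⟨hval, fun ustar hopt => ?_⟩
  rw [hval, ← hopt]
  exact cost_inputDil f ℓ J r q ν μ hf hℓ hJ d hε x ustar

theorem stmt2 {n m : ℕ} (f : (Fin n → ℝ) → (Fin m → ℝ) → Fin n → ℝ)
    (ℓ : (Fin n → ℝ) → (Fin m → ℝ) → ℝ≥0∞) (J : (Fin n → ℝ) → ℝ≥0∞)
    (r : Fin n → ℝ) (q : Fin m → ℝ) (ν μ : ℝ)
    (hr : ∀ i, 0 < r i) (hq : ∀ j, 0 < q j) (hν : 0 < ν)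
    (hf : ∀ x u (ε : ℝ), 0 < ε → f (dil r ε x) (dil q ε u) = dilPow r ε ν (f x u))
    (hℓ : ∀ x u (ε : ℝ), 0 < ε →
      ℓ (dil r ε x) (dil q ε u) = ENNReal.ofReal (ε ^ μ) * ℓ x u)
    (hJ : ∀ x (ε : ℝ), 0 < ε → J (dil r ε x) = ENNReal.ofReal (ε ^ μ) * J x)
    (d : ℕ) (hd : 0 < d)
    (hex : ∀ (γ1 γ2 : ℝ), 0 < γ1 → ∀ x : Fin n → ℝ,
      ∃ u, cost f ℓ J d γ1 γ2 x u = val f ℓ J d γ1 γ2 x ∧ cost f ℓ J d γ1 γ2 x u ≠ ⊤) :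
    ∀ (x : Fin n → ℝ) (ε : ℝ), 0 < ε →
      val f ℓ J d (ε ^ (-μ)) ν (dil r ε x) = val f ℓ J d 1 1 x ∧
      ∀ ustar : ℕ → Fin m → ℝ,
        cost f ℓ J d 1 1 x ustar = val f ℓ J d 1 1 x →
        cost f ℓ J d (ε ^ (-μ)) ν (dil r ε x) (fun k => dilPow q ε (ν ^ k) (ustar k))
          = val f ℓ J d (ε ^ (-μ)) ν (dil r ε x) :=
  stmt2_general f ℓ J r q ν μ hf hℓ hJ d
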